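/- Assume good X and good Y. Then swapping distributes over substitution: Y[X/x]_xs[z₁ ∧ z₂]_zs = (Y[z₁ ∧ z₂]_zs)[(X[z₁ ∧ z₂]_zs)/(x[z₁ ∧ z₂]_{xs,zs})]_xs, where x[z₁ ∧ z₂]_{xs,zs} denotes the transposition of z₁ and z₂ applied to x if xs = zs, and x otherwise. -/

import Mathlib

open scoped Classical

universe u

section Binding

variable (var varsort index bindex opsym : Type u)

/-! ### Inputs -/

/-- An `(α,β)`-input: a partial function from `α` to `β`. -/
abbrev Input (α β : Type u) : Type u := α → Option β

/-- The domain of an input. -/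
def idom {α β : Type u} (inp : Input α β) : Set α := {a | inp a ≠ none}

/-- The componentwise lifting of a predicate to inputs. -/
def liftP {α β : Type u} (P : β → Prop) (inp : Input α β) : Prop :=
  ∀ a b, inp a = some b → P b

/-- The componentwise lifting of a function to inputs. -/
def liftF {α β γ : Type u} (f : β → γ) (inp : Input α β) : Input α γ :=
  fun a => (inp a).map f

/-- An input is small if its domain has cardinality smaller than that of `var`. -/
def smallDom {α β : Type u} (inp : Input α β) : Prop :=
  Cardinal.mk (idom inp) < Cardinal.mk var

/-! ### Quasiterms -/

mutual
/-- Quasiterms: raw terms before quotienting by alpha-equivalence. -/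
inductive QTerm : Type u where
  | qVar : varsort → var → QTerm
  | qOp : opsym → (index → Option QTerm) → (bindex → Option QAbs) → QTerm
/-- Quasiabstractions. -/
inductive QAbs : Type u where
  | qAbs : varsort → var → QTerm → QAbs
end

/-- Transposition of two variables. -/
noncomputable def swapVar (z1 z2 x : var) : var :=
  if x = z1 then z2 else if x = z2 then z1 else x

/-- Sort-aware transposition of variables (acts only on variables of varsort `zs`). -/
noncomputable def swapVarS (zs xs : varsort) (z1 z2 x : var) : var :=
  if xs = zs then swapVar var z1 z2 x else x

variable {var varsort index bindex opsym}

/-- Swapping of the variables `z1`, `z2` at varsort `zs` in a quasiterm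
(transposing them everywhere, including binding positions). -/
noncomputable def qSwap (z1 z2 : var) (zs : varsort) :
    QTerm var varsort index bindex opsym → QTerm var varsort index bindex opsym :=
  QTerm.rec (motive_1 := fun _ => QTerm var varsort index bindex opsym)
    (motive_2 := fun _ => QAbs var varsort index bindex opsym)
    (motive_3 := fun _ => Option (QTerm var varsort index bindex opsym))
    (motive_4 := fun _ => Option (QAbs var varsort index bindex opsym))
    (fun xs x => .qVar xs (swapVarS var varsort zs xs z1 z2 x))
    (fun d _ _ rinp rbinp => .qOp d rinp rbinp)
    (fun xs x _ rX => .qAbs xs (swapVarS var varsort zs xs z1 z2 x) rX)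
    none (fun _ r => some r) none (fun _ r => some r)

/-- Swapping of variables in a quasiabstraction. -/
noncomputable def qSwapAbs (z1 z2 : var) (zs : varsort) :
    QAbs var varsort index bindex opsym → QAbs var varsort index bindex opsym
  | .qAbs xs x X => .qAbs xs (swapVarS var varsort zs xs z1 z2 x) (qSwap z1 z2 zs X)

/-! ### Freshness and goodness -/

mutual
/-- `QFresh ys y X`: the variable `y` of varsort `ys` has no free occurrence in `X`. -/
inductive QFresh : varsort → var → QTerm var varsort index bindex opsym → Prop where
  | qVar : ∀ {ys y xs x}, (ys, y) ≠ (xs, x) → QFresh ys y (.qVar xs x)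
  | qOp : ∀ {ys y d inp binp}, (∀ i X, inp i = some X → QFresh ys y X) →
      (∀ j A, binp j = some A → QFreshAbs ys y A) → QFresh ys y (.qOp d inp binp)
/-- Freshness for quasiabstractions. -/
inductive QFreshAbs : varsort → var → QAbs var varsort index bindex opsym → Prop where
  | qAbs_bound : ∀ {xs x X}, QFreshAbs xs x (.qAbs xs x X)
  | qAbs_body : ∀ {ys y xs x X}, QFresh ys y X → QFreshAbs ys y (.qAbs xs x X)
end

mutual
/-- Good quasiterms: all constructors branch less than `|var|`. -/
inductive QGood : QTerm var varsort index bindex opsym → Prop where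
  | qVar : ∀ {xs x}, QGood (.qVar xs x)
  | qOp : ∀ {d inp binp}, (∀ i X, inp i = some X → QGood X) →
      (∀ j A, binp j = some A → QGoodAbs A) →
      smallDom var inp → smallDom var binp → QGood (.qOp d inp binp)
/-- Good quasiabstractions. -/
inductive QGoodAbs : QAbs var varsort index bindex opsym → Prop where
  | qAbs : ∀ {xs x X}, QGood X → QGoodAbs (.qAbs xs x X)
end

/-! ### Alpha-equivalence -/

mutual
/-- Alpha-equivalence of quasiterms. -/
inductive Alpha : QTerm var varsort index bindex opsym →
    QTerm var varsort index bindex opsym → Prop where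
  | qVar : ∀ {xs x}, Alpha (.qVar xs x) (.qVar xs x)
  | qOp : ∀ {d inp binp inp' binp'},
      (∀ i, inp i = none ↔ inp' i = none) →
      (∀ i X X', inp i = some X → inp' i = some X' → Alpha X X') →
      (∀ j, binp j = none ↔ binp' j = none) →
      (∀ j A A', binp j = some A → binp' j = some A' → AlphaAbs A A') →
      Alpha (.qOp d inp binp) (.qOp d inp' binp')
/-- Alpha-equivalence of quasiabstractions (the exists-fresh formulation). -/
inductive AlphaAbs : QAbs var varsort index bindex opsym →
    QAbs var varsort index bindex opsym → Prop where
  | qAbs : ∀ {xs x x' X X' y}, y ∉ ({x, x'} : Set var) →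
      QFresh xs y X → QFresh xs y X' →
      Alpha (qSwap y x xs X) (qSwap y x' xs X') →
      AlphaAbs (.qAbs xs x X) (.qAbs xs x' X')
end

/-! ### Terms and abstractions as quotients -/

variable (var varsort index bindex opsym)

/-- Terms: quasiterms modulo alpha-equivalence. -/
def Term : Type u := Quot (@Alpha var varsort index bindex opsym)

/-- Abstractions: quasiabstractions modulo alpha-equivalence. -/
def Abstr : Type u := Quot (@AlphaAbs var varsort index bindex opsym)

variable {var varsort index bindex opsym}

/-- The projection from quasiterms to terms. -/
def tmk : QTerm var varsort index bindex opsym → Term var varsort index bindex opsym :=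
  Quot.mk _

/-- The projection from quasiabstractions to abstractions. -/
def amk : QAbs var varsort index bindex opsym → Abstr var varsort index bindex opsym :=
  Quot.mk _

/-- A representative of a term. -/
noncomputable def trep (X : Term var varsort index bindex opsym) :
    QTerm var varsort index bindex opsym := Quot.out X

/-- A representative of an abstraction. -/
noncomputable def arep (A : Abstr var varsort index bindex opsym) :
    QAbs var varsort index bindex opsym := Quot.out A

/-- Good terms. -/
def good (X : Term var varsort index bindex opsym) : Prop := QGood (trep X)

/-- Good abstractions. -/
def goodAbs (A : Abstr var varsort index bindex opsym) : Prop := QGoodAbs (arep A)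

/-- The variable-injection constructor on terms. -/
def Var (xs : varsort) (x : var) : Term var varsort index bindex opsym :=
  tmk (.qVar xs x)

/-- The operation constructor on terms. -/
noncomputable def Op (d : opsym) (inp : Input index (Term var varsort index bindex opsym))
    (binp : Input bindex (Abstr var varsort index bindex opsym)) :
    Term var varsort index bindex opsym :=
  tmk (.qOp d (liftF trep inp) (liftF arep binp))

/-- The abstraction constructor. -/
noncomputable def Abs (xs : varsort) (x : var) (X : Term var varsort index bindex opsym) :
    Abstr var varsort index bindex opsym :=
  amk (.qAbs xs x (trep X))

/-- Freshness on terms. -/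
def fresh (ys : varsort) (y : var) (X : Term var varsort index bindex opsym) : Prop :=
  QFresh ys y (trep X)

/-- Freshness on abstractions. -/
def freshAbs (ys : varsort) (y : var) (A : Abstr var varsort index bindex opsym) : Prop :=
  QFreshAbs ys y (arep A)

/-- Swapping on terms. -/
noncomputable def tswap (X : Term var varsort index bindex opsym)
    (z1 z2 : var) (zs : varsort) : Term var varsort index bindex opsym :=
  tmk (qSwap z1 z2 zs (trep X))

/-! ### Substitution -/

mutual
/-- The graph of capture-avoiding substitution on quasiterms:
`QSubst X Y y ys Z` means that `Z` is a result of substituting `Y` for the free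
occurrences of the variable `y` of varsort `ys` in `X` (along a capture-free
representative). -/
inductive QSubst : QTerm var varsort index bindex opsym →
    QTerm var varsort index bindex opsym → var → varsort →
    QTerm var varsort index bindex opsym → Prop where
  | var_eq : ∀ {Y y ys}, QSubst (.qVar ys y) Y y ys Y
  | var_ne : ∀ {Y y ys xs x}, (xs, x) ≠ (ys, y) → QSubst (.qVar xs x) Y y ys (.qVar xs x)
  | op : ∀ {Y y ys d inp binp inp' binp'},
      (∀ i, inp i = none ↔ inp' i = none) →
      (∀ i X X', inp i = some X → inp' i = some X' → QSubst X Y y ys X') →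
      (∀ j, binp j = none ↔ binp' j = none) →
      (∀ j A A', binp j = some A → binp' j = some A' → QSubstAbs A Y y ys A') →
      QSubst (.qOp d inp binp) Y y ys (.qOp d inp' binp')
/-- The graph of capture-avoiding substitution on quasiabstractions. -/
inductive QSubstAbs : QAbs var varsort index bindex opsym →
    QTerm var varsort index bindex opsym → var → varsort →
    QAbs var varsort index bindex opsym → Prop where
  | abs : ∀ {Y y ys xs x X X'}, (xs, x) ≠ (ys, y) → QFresh xs x Y →
      QSubst X Y y ys X' → QSubstAbs (.qAbs xs x X) Y y ys (.qAbs xs x X')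
end

/-- The graph of capture-avoiding substitution on terms. -/
def SubstRel (X Y : Term var varsort index bindex opsym) (y : var) (ys : varsort)
    (Z : Term var varsort index bindex opsym) : Prop :=
  ∃ qX qZ, tmk qX = X ∧ tmk qZ = Z ∧ QSubst qX (trep Y) y ys qZ

/-- Capture-avoiding substitution on terms: `subst X Y y ys` is `X[Y/y]_ys`. -/
noncomputable def subst (X Y : Term var varsort index bindex opsym)
    (y : var) (ys : varsort) : Term var varsort index bindex opsym :=
  if h : ∃ Z, SubstRel X Y y ys Z then h.choose else X

/-- The graph of capture-avoiding substitution on abstractions. -/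
def SubstAbsRel (A : Abstr var varsort index bindex opsym)
    (Y : Term var varsort index bindex opsym) (y : var) (ys : varsort)
    (B : Abstr var varsort index bindex opsym) : Prop :=
  ∃ qA qB, amk qA = A ∧ amk qB = B ∧ QSubstAbs qA (trep Y) y ys qB

/-- Capture-avoiding substitution on abstractions: `substAbs A Y y ys` is `A[Y/y]_ys`. -/
noncomputable def substAbs (A : Abstr var varsort index bindex opsym)
    (Y : Term var varsort index bindex opsym) (y : var) (ys : varsort) :
    Abstr var varsort index bindex opsym :=
  if h : ∃ B, SubstAbsRel A Y y ys B then h.choose else A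

/-! ### Parallel substitution -/

mutual
/-- The graph of capture-avoiding parallel substitution on quasiterms, along an
assignment `ρ : varsort → var → Option qterm`. -/
inductive QPSubst : QTerm var varsort index bindex opsym →
    (varsort → var → Option (QTerm var varsort index bindex opsym)) →
    QTerm var varsort index bindex opsym → Prop where
  | var_some : ∀ {ρ xs x Y}, ρ xs x = some Y → QPSubst (.qVar xs x) ρ Y
  | var_none : ∀ {ρ xs x}, ρ xs x = none → QPSubst (.qVar xs x) ρ (.qVar xs x)
  | op : ∀ {ρ d inp binp inp' binp'},
      (∀ i, inp i = none ↔ inp' i = none) →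
      (∀ i X X', inp i = some X → inp' i = some X' → QPSubst X ρ X') →
      (∀ j, binp j = none ↔ binp' j = none) →
      (∀ j A A', binp j = some A → binp' j = some A' → QPSubstAbs A ρ A') →
      QPSubst (.qOp d inp binp) ρ (.qOp d inp' binp')
/-- The graph of capture-avoiding parallel substitution on quasiabstractions. -/
inductive QPSubstAbs : QAbs var varsort index bindex opsym →
    (varsort → var → Option (QTerm var varsort index bindex opsym)) →
    QAbs var varsort index bindex opsym → Prop where
  | abs : ∀ {ρ xs x X X'}, ρ xs x = none →
      (∀ ys y Y, ρ ys y = some Y → QFresh xs x Y) →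
      QPSubst X ρ X' → QPSubstAbs (.qAbs xs x X) ρ (.qAbs xs x X')
end

/-- Turning a term-valued assignment into a quasiterm-valued one, by picking
representatives. -/
noncomputable def qassign (ρ : varsort → var → Option (Term var varsort index bindex opsym)) :
    varsort → var → Option (QTerm var varsort index bindex opsym) :=
  fun xs x => (ρ xs x).map trep

/-- The graph of parallel substitution on terms. -/
def PSubstRel (X : Term var varsort index bindex opsym)
    (ρ : varsort → var → Option (Term var varsort index bindex opsym))
    (Z : Term var varsort index bindex opsym) : Prop :=
  ∃ qX qZ, tmk qX = X ∧ tmk qZ = Z ∧ QPSubst qX (qassign ρ) qZ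

/-- Capture-avoiding parallel substitution on terms: `psubst X ρ` is `X[ρ]`. -/
noncomputable def psubst (X : Term var varsort index bindex opsym)
    (ρ : varsort → var → Option (Term var varsort index bindex opsym)) :
    Term var varsort index bindex opsym :=
  if h : ∃ Z, PSubstRel X ρ Z then h.choose else X

/-- The graph of parallel substitution on abstractions. -/
def PSubstAbsRel (A : Abstr var varsort index bindex opsym)
    (ρ : varsort → var → Option (Term var varsort index bindex opsym))
    (B : Abstr var varsort index bindex opsym) : Prop :=
  ∃ qA qB, amk qA = A ∧ amk qB = B ∧ QPSubstAbs qA (qassign ρ) qB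

/-- Capture-avoiding parallel substitution on abstractions. -/
noncomputable def psubstAbs (A : Abstr var varsort index bindex opsym)
    (ρ : varsort → var → Option (Term var varsort index bindex opsym)) :
    Abstr var varsort index bindex opsym :=
  if h : ∃ B, PSubstAbsRel A ρ B then h.choose else A

/-! Swapping is a bijective renaming, so it carries a derivation of the substitution graph
`QSubst Y X x xs Z` to one of `QSubst Y[z₁∧z₂] X[z₁∧z₂] x[z₁∧z₂] xs Z[z₁∧z₂]`. The theorem
follows once substitution on terms is shown to be computed by any such derivation, i.e. once
the graph is total and single-valued up to alpha on good quasiterms. Both rest on alpha being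
a swapping-invariant equivalence on good quasiterms. Good quasiterms have fewer than `|var|`
free variables, so regularity supplies fresh variables for renaming bound ones; transitivity
of the exists-fresh clause goes through its "some/any" property, by induction on a
swapping-invariant ordinal size. -/

theorem swapVarS_of_sort_eq (zs : varsort) (z1 z2 x : var) :
    swapVarS var varsort zs zs z1 z2 x = Equiv.swap z1 z2 x :=
  if_pos rfl

theorem swapVarS_of_sort_ne {zs xs : varsort} (h : xs ≠ zs) (z1 z2 x : var) :
    swapVarS var varsort zs xs z1 z2 x = x :=
  if_neg h

theorem swapVarS_involutive (zs xs : varsort) (z1 z2 : var) :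
    Function.Involutive (swapVarS var varsort zs xs z1 z2) := by
  intro x
  by_cases h : xs = zs
  · subst h; simp [swapVarS_of_sort_eq]
  · simp [swapVarS_of_sort_ne h]

theorem swapVarS_injective (zs xs : varsort) (z1 z2 : var) :
    Function.Injective (swapVarS var varsort zs xs z1 z2) :=
  (swapVarS_involutive zs xs z1 z2).injective

theorem swapVarS_self (zs xs : varsort) (z x : var) : swapVarS var varsort zs xs z z x = x := by
  by_cases h : xs = zs
  · subst h; simp [swapVarS_of_sort_eq]
  · simp [swapVarS_of_sort_ne h]

theorem swapVarS_comm (zs xs : varsort) (z1 z2 x : var) :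
    swapVarS var varsort zs xs z1 z2 x = swapVarS var varsort zs xs z2 z1 x := by
  by_cases h : xs = zs
  · subst h; simp [swapVarS_of_sort_eq, Equiv.swap_comm]
  · simp [swapVarS_of_sort_ne h]

theorem swapVarS_of_ne {zs xs : varsort} {z1 z2 x : var}
    (h1 : (zs, z1) ≠ (xs, x)) (h2 : (zs, z2) ≠ (xs, x)) :
    swapVarS var varsort zs xs z1 z2 x = x := by
  by_cases h : xs = zs
  · subst h
    simp only [ne_eq, Prod.mk.injEq, true_and] at h1 h2
    rw [swapVarS_of_sort_eq, Equiv.swap_apply_of_ne_of_ne (Ne.symm h1) (Ne.symm h2)]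
  · exact swapVarS_of_sort_ne h z1 z2 x

theorem swapVarS_pair_ne {zs xs ys : varsort} {z1 z2 x y : var} (h : (xs, x) ≠ (ys, y)) :
    (xs, swapVarS var varsort zs xs z1 z2 x) ≠ (ys, swapVarS var varsort zs ys z1 z2 y) := by
  intro he
  obtain ⟨rfl, he⟩ := Prod.mk.inj he
  exact h (by rw [swapVarS_injective _ _ _ _ he])

theorem swapVarS_swapVarS (us zs xs : varsort) (u v a b x : var) :
    swapVarS var varsort us xs u v (swapVarS var varsort zs xs a b x)
      = swapVarS var varsort zs xs (swapVarS var varsort us zs u v a)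
          (swapVarS var varsort us zs u v b) (swapVarS var varsort us xs u v x) := by
  by_cases hz : xs = zs
  · subst hz
    by_cases hu : xs = us
    · subst hu
      simp only [swapVarS_of_sort_eq, Equiv.swap_apply_apply, Equiv.Perm.mul_apply,
        Equiv.swap_inv, Equiv.swap_apply_self]
    · simp only [swapVarS_of_sort_eq, swapVarS_of_sort_ne hu]
  · simp only [swapVarS_of_sort_ne hz]

section Inputs

variable {α β β' γ δ : Type u}

/-- The lifting `↑R` of a binary relation to inputs. -/
def liftRel (R : β → γ → Prop) (inp : Input α β) (inp' : Input α γ) : Prop :=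
  ∀ a, Option.Rel R (inp a) (inp' a)

theorem liftRel_iff {R : β → γ → Prop} {inp : Input α β} {inp' : Input α γ} :
    liftRel R inp inp' ↔ (∀ a, inp a = none ↔ inp' a = none) ∧
      ∀ a b c, inp a = some b → inp' a = some c → R b c := by
  refine ⟨fun h => ⟨fun a => ?_, fun a b c hb hc => ?_⟩, fun ⟨hdom, hrel⟩ a => ?_⟩
  · have := h a; generalize inp a = o at *; generalize inp' a = o' at *
    cases o <;> cases o' <;> simp_all
  · simpa [hb, hc] using h a
  · have h1 := hdom a; have h2 := hrel a
    generalize inp a = o at *; generalize inp' a = o' at *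
    cases o <;> cases o' <;> simp_all

namespace liftRel

variable {R S : β → γ → Prop} {inp : Input α β} {inp' : Input α γ}

theorem mono (h : liftRel R inp inp') (hRS : ∀ a b c, inp a = some b → R b c → S b c) :
    liftRel S inp inp' := by
  intro a; have h1 := h a; have h2 := hRS a
  generalize inp a = o at *; generalize inp' a = o' at *
  cases h1 <;> simp_all

theorem flip (h : liftRel R inp inp') : liftRel (fun c b => R b c) inp' inp := by
  intro a; have h1 := h a
  generalize inp a = o at *; generalize inp' a = o' at *
  cases h1 <;> simp_all

theorem trans {S : γ → δ → Prop} {T : β → δ → Prop} {inp'' : Input α δ}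
    (h : liftRel R inp inp') (h' : liftRel S inp' inp'')
    (hRST : ∀ a b c d, inp a = some b → R b c → S c d → T b d) : liftRel T inp inp'' := by
  intro a; have h1 := h a; have h2 := h' a; have h3 := hRST a
  generalize inp a = o at *; generalize inp' a = o' at *; generalize inp'' a = o'' at *
  cases h1 with
  | none => cases h2; exact .none
  | some hr => cases h2 with
    | some hs => exact .some (h3 _ _ _ rfl hr hs)

theorem liftP_of_liftP {P : β → Prop} {Q : γ → Prop} (h : liftRel R inp inp')
    (hP : liftP P inp)
    (hPQ : ∀ a b c, inp a = some b → R b c → P b → Q c) : liftP Q inp' := by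
  intro a c hc
  have h1 := h a; have h2 := hP a; have h3 := hPQ a
  generalize inp a = o at *; generalize inp' a = o' at *
  cases h1 <;> simp_all

theorem span {R' : β → δ → Prop} {T : γ → δ → Prop} {inp'' : Input α δ}
    (h : liftRel R inp inp') (h' : liftRel R' inp inp'')
    (hT : ∀ a b c d, inp a = some b → R b c → R' b d → T c d) : liftRel T inp' inp'' := by
  intro a; have h1 := h a; have h2 := h' a; have h3 := hT a
  generalize inp a = o at *; generalize inp' a = o' at *; generalize inp'' a = o'' at *
  cases h1 with
  | none => cases h2; exact .none
  | some hr => cases h2 with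
    | some hs => exact .some (h3 _ _ _ rfl hr hs)

theorem idom_eq (h : liftRel R inp inp') : idom inp = idom inp' := by
  ext a; exact not_congr ((liftRel_iff.1 h).1 a)

end liftRel

theorem liftRel_refl {R : β → β → Prop} {inp : Input α β} (h : liftP (fun b => R b b) inp) :
    liftRel R inp inp := by
  intro a; have h1 := h a; generalize inp a = o at *
  cases o <;> simp_all

theorem liftRel.map {R : γ → δ → Prop} {f : β → γ} {g : β' → δ} {inp : Input α β}
    {inp' : Input α β'} (h : liftRel (fun b c => R (f b) (g c)) inp inp') :
    liftRel R (fun a => (inp a).map f) (fun a => (inp' a).map g) := by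
  intro a; have h1 := h a; dsimp only
  generalize inp a = o at *; generalize inp' a = o' at *
  cases h1 <;> simp_all

theorem liftRel.map_right {R : β → δ → Prop} {g : γ → δ} {inp : Input α β}
    {inp' : Input α γ} (h : liftRel (fun b c => R b (g c)) inp inp') :
    liftRel R inp (fun a => (inp' a).map g) := by
  simpa using liftRel.map (f := id) h

theorem liftRel.map_left {R : γ → δ → Prop} {f : β → γ} {inp : Input α β}
    {inp' : Input α δ} (h : liftRel (fun b c => R (f b) c) inp inp') :
    liftRel R (fun a => (inp a).map f) inp' := by
  simpa using liftRel.map (g := id) h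

theorem exists_liftRel {R : β → γ → Prop} {inp : Input α β}
    (h : liftP (fun b => ∃ c, R b c) inp) : ∃ inp', liftRel R inp inp' := by
  have : ∀ a, ∃ o, Option.Rel R (inp a) o := by
    intro a; have h1 := h a; generalize inp a = o at *
    cases o with
    | none => exact ⟨none, .none⟩
    | some b => obtain ⟨c, hc⟩ := h1 b rfl; exact ⟨some c, .some hc⟩
  choose inp' h' using this
  exact ⟨inp', h'⟩

theorem liftP_map {P : γ → Prop} {f : β → γ} {inp : Input α β} :
    liftP P (fun a => (inp a).map f) ↔ liftP (fun b => P (f b)) inp := by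
  refine forall_congr' fun a => ?_
  dsimp only
  generalize inp a = o
  cases o <;> simp

theorem idom_map (f : β → γ) (inp : Input α β) :
    idom (fun a => (inp a).map f) = idom inp := by
  ext a; simp [idom]

end Inputs

section QuasiTerms

variable {xs ys zs : varsort} {x y z1 z2 : var} {d : opsym}
  {inp : Input index (QTerm var varsort index bindex opsym)}
  {binp : Input bindex (QAbs var varsort index bindex opsym)}
  {X : QTerm var varsort index bindex opsym}

@[simp]
theorem qFresh_qVar_iff : QFresh ys y (.qVar xs x : QTerm var varsort index bindex opsym) ↔
    (ys, y) ≠ (xs, x) :=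
  ⟨fun h => by cases h; assumption, .qVar⟩

@[simp]
theorem qFresh_qOp_iff : QFresh ys y (.qOp d inp binp) ↔
    liftP (QFresh ys y) inp ∧ liftP (QFreshAbs ys y) binp :=
  ⟨fun h => by cases h; constructor <;> assumption, fun h => .qOp h.1 h.2⟩

@[simp]
theorem qFreshAbs_qAbs_iff :
    QFreshAbs ys y (.qAbs xs x X) ↔ (ys, y) = (xs, x) ∨ QFresh ys y X := by
  constructor
  · rintro (_ | h)
    · exact Or.inl rfl
    · exact Or.inr h
  · rintro (h | h)
    · obtain ⟨rfl, rfl⟩ := Prod.mk.inj h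
      exact .qAbs_bound
    · exact .qAbs_body h

@[simp]
theorem qGood_qOp_iff : QGood (.qOp d inp binp) ↔
    liftP QGood inp ∧ liftP QGoodAbs binp ∧ smallDom var inp ∧ smallDom var binp :=
  ⟨fun h => by cases h; refine ⟨?_, ?_, ?_, ?_⟩ <;> assumption,
    fun ⟨h1, h2, h3, h4⟩ => .qOp h1 h2 h3 h4⟩

@[simp]
theorem qGoodAbs_qAbs_iff : QGoodAbs (.qAbs xs x X) ↔ QGood X :=
  ⟨fun h => by cases h; assumption, .qAbs⟩

@[simp]
theorem qSwap_qVar : qSwap z1 z2 zs (.qVar xs x : QTerm var varsort index bindex opsym)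
    = .qVar xs (swapVarS var varsort zs xs z1 z2 x) := rfl

@[simp]
theorem qSwap_qOp : qSwap z1 z2 zs (.qOp d inp binp)
    = .qOp d (fun i => (inp i).map (qSwap z1 z2 zs))
        (fun j => (binp j).map (qSwapAbs z1 z2 zs)) := by
  show QTerm.qOp _ _ _ = _
  congr 1
  · funext i; cases inp i <;> rfl
  · funext j; cases binp j with
    | none => rfl
    | some A => cases A; rfl

@[simp]
theorem qSwapAbs_qAbs : qSwapAbs z1 z2 zs (.qAbs xs x X)
    = .qAbs xs (swapVarS var varsort zs xs z1 z2 x) (qSwap z1 z2 zs X) := rfl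

end QuasiTerms

noncomputable def qSize : QTerm var varsort index bindex opsym → Ordinal.{u} :=
  QTerm.rec (motive_1 := fun _ => Ordinal.{u}) (motive_2 := fun _ => Ordinal.{u})
    (motive_3 := fun _ => Ordinal.{u}) (motive_4 := fun _ => Ordinal.{u})
    (fun _ _ => 0)
    (fun _ _ _ rinp rbinp => (⨆ i, rinp i) + ((⨆ j, rbinp j) + 1))
    (fun _ _ _ rX => rX + 1)
    0 (fun _ r => r + 1) 0 (fun _ r => r + 1)

noncomputable def qSizeAbs : QAbs var varsort index bindex opsym → Ordinal.{u}
  | .qAbs _ _ X => qSize X + 1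

section Size

variable {d : opsym} {inp : Input index (QTerm var varsort index bindex opsym)}
  {binp : Input bindex (QAbs var varsort index bindex opsym)}

theorem qSize_qOp : qSize (.qOp d inp binp) =
    (⨆ i, (inp i).elim 0 (qSize · + 1)) + ((⨆ j, (binp j).elim 0 (qSizeAbs · + 1)) + 1) :=
  congrArg₂ (· + ·)
    (iSup_congr fun i => by cases inp i <;> rfl)
    (congrArg (· + 1) (iSup_congr fun j => by
      cases h : binp j with
      | none => rfl
      | some A => cases A; rfl))

theorem qSize_lt_of_mem {i : index} {X : QTerm var varsort index bindex opsym}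
    (h : inp i = some X) : qSize X < qSize (.qOp d inp binp) := by
  rw [qSize_qOp]
  refine (Order.lt_add_one_iff.2 le_rfl).trans_le ?_
  refine le_trans ?_ le_self_add
  convert le_ciSup Ordinal.bddAbove_of_small i
  simp [h]

theorem qSizeAbs_lt_of_mem {j : bindex} {A : QAbs var varsort index bindex opsym}
    (h : binp j = some A) : qSizeAbs A < qSize (.qOp d inp binp) := by
  rw [qSize_qOp]
  refine (Order.lt_add_one_iff.2 le_rfl).trans_le ?_
  refine le_trans ?_ (le_self_add.trans le_add_self)
  convert le_ciSup Ordinal.bddAbove_of_small j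
  simp [h]

/-- Induction on quasiterms in which the body of an abstraction may be replaced by any
quasiterm of the same size, e.g. a renamed copy. -/
theorem QTerm.induction_on_size {P : QTerm var varsort index bindex opsym → Prop}
    {Q : QAbs var varsort index bindex opsym → Prop}
    (hvar : ∀ xs x, P (.qVar xs x))
    (hop : ∀ d inp binp, liftP P inp → liftP Q binp → P (.qOp d inp binp))
    (habs : ∀ xs x X, (∀ X', qSize X' = qSize X → P X') → Q (.qAbs xs x X)) :
    (∀ X, P X) ∧ (∀ A, Q A) := by
  suffices key : ∀ s : Ordinal, (∀ X, qSize X = s → P X) ∧ (∀ A, qSizeAbs A = s → Q A)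
    from ⟨fun X => (key _).1 X rfl, fun A => (key _).2 A rfl⟩
  intro s
  induction s using WellFoundedLT.induction with
  | ind s IH =>
    refine ⟨fun X hX => ?_, fun A hA => ?_⟩
    · cases X with
      | qVar xs x => exact hvar xs x
      | qOp d inp binp =>
        exact hop d inp binp (fun i X h => (IH _ (hX ▸ qSize_lt_of_mem h)).1 X rfl)
          (fun j A h => (IH _ (hX ▸ qSizeAbs_lt_of_mem h)).2 A rfl)
    · cases A with
      | qAbs xs x X =>
        subst hA
        exact habs xs x X fun X' h' =>
          (IH _ (Order.lt_add_one_iff.2 le_rfl)).1 X' h'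

end Size

section Swapping

theorem qSwap_self_and (z : var) (zs : varsort) :
    (∀ X : QTerm var varsort index bindex opsym, qSwap z z zs X = X) ∧
    (∀ A : QAbs var varsort index bindex opsym, qSwapAbs z z zs A = A) := by
  refine QTerm.induction_on_size (fun _ _ => by simp [swapVarS_self]) ?_ ?_
  · intro d inp binp hi hb
    simp only [qSwap_qOp]
    congr 1 <;> funext a
    · exact (Option.map_congr (hi a)).trans Option.map_id'
    · exact (Option.map_congr (hb a)).trans Option.map_id'
  · intro xs x X hX
    simp [swapVarS_self, hX X rfl]

theorem qSwap_self (z : var) (zs : varsort) (X : QTerm var varsort index bindex opsym) :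
    qSwap z z zs X = X :=
  (qSwap_self_and z zs).1 X

theorem qSwap_qSwap_self_and (z1 z2 : var) (zs : varsort) :
    (∀ X : QTerm var varsort index bindex opsym, qSwap z1 z2 zs (qSwap z1 z2 zs X) = X) ∧
    (∀ A : QAbs var varsort index bindex opsym,
      qSwapAbs z1 z2 zs (qSwapAbs z1 z2 zs A) = A) := by
  refine QTerm.induction_on_size (fun _ _ => by simp [swapVarS_involutive _ _ _ _ _]) ?_ ?_
  · intro d inp binp hi hb
    simp only [qSwap_qOp, Option.map_map]
    congr 1 <;> funext a
    · exact (Option.map_congr (hi a)).trans Option.map_id'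
    · exact (Option.map_congr (hb a)).trans Option.map_id'
  · intro xs x X hX
    simp [swapVarS_involutive _ _ _ _ _, hX X rfl]

theorem qSwap_qSwap_self (z1 z2 : var) (zs : varsort) (X : QTerm var varsort index bindex opsym) :
    qSwap z1 z2 zs (qSwap z1 z2 zs X) = X :=
  (qSwap_qSwap_self_and z1 z2 zs).1 X

theorem qSwap_comm_and (z1 z2 : var) (zs : varsort) :
    (∀ X : QTerm var varsort index bindex opsym, qSwap z1 z2 zs X = qSwap z2 z1 zs X) ∧
    (∀ A : QAbs var varsort index bindex opsym, qSwapAbs z1 z2 zs A = qSwapAbs z2 z1 zs A) := by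
  refine QTerm.induction_on_size (fun _ _ => by simp [swapVarS_comm _ _ z1]) ?_ ?_
  · intro d inp binp hi hb
    simp only [qSwap_qOp]
    congr 1 <;> funext a
    · exact Option.map_congr (hi a)
    · exact Option.map_congr (hb a)
  · intro xs x X hX
    simp [swapVarS_comm _ _ z1, hX X rfl]

theorem qSwap_comm (z1 z2 : var) (zs : varsort) (X : QTerm var varsort index bindex opsym) :
    qSwap z1 z2 zs X = qSwap z2 z1 zs X :=
  (qSwap_comm_and z1 z2 zs).1 X

theorem qSwap_qSwap_and (u v a b : var) (us zs : varsort) :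
    (∀ X : QTerm var varsort index bindex opsym,
      qSwap u v us (qSwap a b zs X)
        = qSwap (swapVarS var varsort us zs u v a) (swapVarS var varsort us zs u v b) zs
            (qSwap u v us X)) ∧
    (∀ A : QAbs var varsort index bindex opsym,
      qSwapAbs u v us (qSwapAbs a b zs A)
        = qSwapAbs (swapVarS var varsort us zs u v a) (swapVarS var varsort us zs u v b) zs
            (qSwapAbs u v us A)) := by
  refine QTerm.induction_on_size
    (fun _ _ => by simp only [qSwap_qVar]; rw [swapVarS_swapVarS]) ?_ ?_
  · intro d inp binp hi hb
    simp only [qSwap_qOp, Option.map_map]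
    congr 1 <;> funext a
    · exact Option.map_congr (hi a)
    · exact Option.map_congr (hb a)
  · intro xs x X hX
    rw [qSwapAbs_qAbs, qSwapAbs_qAbs, qSwapAbs_qAbs, qSwapAbs_qAbs, swapVarS_swapVarS, hX X rfl]

theorem qSwap_qSwap (u v a b : var) (us zs : varsort) (X : QTerm var varsort index bindex opsym) :
    qSwap u v us (qSwap a b zs X)
      = qSwap (swapVarS var varsort us zs u v a) (swapVarS var varsort us zs u v b) zs
          (qSwap u v us X) :=
  (qSwap_qSwap_and u v a b us zs).1 X

theorem qSwap_qSwap_of_ne {w u x : var} (hwx : w ≠ x) (hux : u ≠ x) (xs : varsort)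
    (X : QTerm var varsort index bindex opsym) :
    qSwap w u xs (qSwap u x xs X) = qSwap w x xs (qSwap w u xs X) := by
  rw [qSwap_qSwap, swapVarS_of_sort_eq, swapVarS_of_sort_eq, Equiv.swap_apply_right,
    Equiv.swap_apply_of_ne_of_ne hwx.symm hux.symm]

theorem qSize_qOp_congr {d d' : opsym} {inp : Input index (QTerm var varsort index bindex opsym)}
    {binp : Input bindex (QAbs var varsort index bindex opsym)}
    {inp' : Input index (QTerm var varsort index bindex opsym)}
    {binp' : Input bindex (QAbs var varsort index bindex opsym)}
    (h : liftRel (fun X X' => qSize X = qSize X') inp inp')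
    (hb : liftRel (fun A A' => qSizeAbs A = qSizeAbs A') binp binp') :
    qSize (.qOp d inp binp) = qSize (.qOp d' inp' binp') := by
  rw [qSize_qOp, qSize_qOp]
  congr 2
  · funext i; have h1 := h i
    generalize inp i = o at *; generalize inp' i = o' at *
    cases h1 <;> simp_all
  · congr 1; funext j; have h1 := hb j
    generalize binp j = o at *; generalize binp' j = o' at *
    cases h1 <;> simp_all

theorem qSize_qSwap_and (z1 z2 : var) (zs : varsort) :
    (∀ X : QTerm var varsort index bindex opsym, qSize (qSwap z1 z2 zs X) = qSize X) ∧
    (∀ A : QAbs var varsort index bindex opsym, qSizeAbs (qSwapAbs z1 z2 zs A) = qSizeAbs A) := by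
  refine QTerm.induction_on_size (fun _ _ => rfl) ?_ ?_
  · intro d inp binp hi hb
    rw [qSwap_qOp]
    refine qSize_qOp_congr ?_ ?_
    · exact .map_left (liftRel_refl hi)
    · exact .map_left (liftRel_refl hb)
  · intro xs x X hX
    simp [qSizeAbs, hX X rfl]

theorem qSize_qSwap (z1 z2 : var) (zs : varsort) (X : QTerm var varsort index bindex opsym) :
    qSize (qSwap z1 z2 zs X) = qSize X :=
  (qSize_qSwap_and z1 z2 zs).1 X

end Swapping

section FreshGood

theorem qFresh_qSwap_and (z1 z2 : var) (zs : varsort) :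
    (∀ X : QTerm var varsort index bindex opsym, ∀ ys y, QFresh ys y X →
      QFresh ys (swapVarS var varsort zs ys z1 z2 y) (qSwap z1 z2 zs X)) ∧
    (∀ A : QAbs var varsort index bindex opsym, ∀ ys y, QFreshAbs ys y A →
      QFreshAbs ys (swapVarS var varsort zs ys z1 z2 y) (qSwapAbs z1 z2 zs A)) := by
  refine QTerm.induction_on_size ?_ ?_ ?_
  · intro xs x ys y h
    rw [qFresh_qVar_iff] at h
    rw [qSwap_qVar, qFresh_qVar_iff]
    exact swapVarS_pair_ne h
  · intro d inp binp hi hb ys y h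
    rw [qFresh_qOp_iff] at h
    rw [qSwap_qOp, qFresh_qOp_iff, liftP_map, liftP_map]
    exact ⟨fun i X hX => hi i X hX ys y (h.1 i X hX), fun j A hA => hb j A hA ys y (h.2 j A hA)⟩
  · intro xs x X hX ys y h
    rw [qFreshAbs_qAbs_iff] at h
    rw [qSwapAbs_qAbs, qFreshAbs_qAbs_iff]
    rcases h with h | h
    · obtain ⟨rfl, rfl⟩ := Prod.mk.inj h
      exact Or.inl rfl
    · exact Or.inr (hX X rfl ys y h)

theorem qFresh_qSwap_iff {z1 z2 : var} {zs ys : varsort} {y : var}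
    {X : QTerm var varsort index bindex opsym} :
    QFresh ys y (qSwap z1 z2 zs X) ↔ QFresh ys (swapVarS var varsort zs ys z1 z2 y) X := by
  constructor
  · intro h
    simpa [qSwap_qSwap_self] using (qFresh_qSwap_and z1 z2 zs).1 _ ys y h
  · intro h
    simpa [swapVarS_involutive _ _ _ _ y] using (qFresh_qSwap_and z1 z2 zs).1 _ ys _ h

theorem qGood_qSwap_and (z1 z2 : var) (zs : varsort) :
    (∀ X : QTerm var varsort index bindex opsym, QGood X → QGood (qSwap z1 z2 zs X)) ∧
    (∀ A : QAbs var varsort index bindex opsym,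
      QGoodAbs A → QGoodAbs (qSwapAbs z1 z2 zs A)) := by
  refine QTerm.induction_on_size (fun _ _ _ => .qVar) ?_ ?_
  · intro d inp binp hi hb h
    obtain ⟨hgi, hgb, hsi, hsb⟩ := qGood_qOp_iff.1 h
    rw [qSwap_qOp, qGood_qOp_iff, liftP_map, liftP_map, smallDom, smallDom, idom_map, idom_map]
    exact ⟨fun i X hX => hi i X hX (hgi i X hX), fun j A hA => hb j A hA (hgb j A hA), hsi, hsb⟩
  · intro xs x X hX h
    rw [qSwapAbs_qAbs, qGoodAbs_qAbs_iff]
    exact hX X rfl (qGoodAbs_qAbs_iff.1 h)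

@[simp]
theorem qGood_qSwap_iff {z1 z2 : var} {zs : varsort} {X : QTerm var varsort index bindex opsym} :
    QGood (qSwap z1 z2 zs X) ↔ QGood X :=
  ⟨fun h => qSwap_qSwap_self z1 z2 zs X ▸ (qGood_qSwap_and z1 z2 zs).1 _ h,
    (qGood_qSwap_and z1 z2 zs).1 X⟩

theorem mk_not_qFresh_lt_and (hreg : (Cardinal.mk var).IsRegular) :
    (∀ X : QTerm var varsort index bindex opsym, QGood X → ∀ ys,
      Cardinal.mk {y | ¬ QFresh ys y X} < Cardinal.mk var) ∧
    (∀ A : QAbs var varsort index bindex opsym, QGoodAbs A → ∀ ys,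
      Cardinal.mk {y | ¬ QFreshAbs ys y A} < Cardinal.mk var) := by
  refine QTerm.induction_on_size ?_ ?_ ?_
  · intro xs x _ ys
    refine lt_of_lt_of_le ?_ hreg.aleph0_le
    refine (Set.Finite.subset (Set.finite_singleton x) fun y hy => ?_).lt_aleph0
    by_contra hyx
    exact hy (qFresh_qVar_iff.2 fun h => hyx (Prod.mk.inj h).2)
  · intro d inp binp hi hb h ys
    obtain ⟨hgi, hgb, hsi, hsb⟩ := qGood_qOp_iff.1 h
    have hsub : {y | ¬ QFresh ys y (.qOp d inp binp)} ⊆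
        (⋃ i : idom inp, {y | ∃ X, inp i = some X ∧ ¬ QFresh ys y X}) ∪
          ⋃ j : idom binp, {y | ∃ A, binp j = some A ∧ ¬ QFreshAbs ys y A} := by
      intro y hy
      simp only [Set.mem_ofPred_eq, qFresh_qOp_iff, liftP, not_and_or, not_forall] at hy
      rcases hy with ⟨i, X, hX, hy⟩ | ⟨j, A, hA, hy⟩
      · exact Or.inl (Set.mem_iUnion.2 ⟨⟨i, by simp [idom, hX]⟩, X, hX, hy⟩)
      · exact Or.inr (Set.mem_iUnion.2 ⟨⟨j, by simp [idom, hA]⟩, A, hA, hy⟩)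
    refine (Cardinal.mk_le_mk_of_subset hsub).trans_lt ((Cardinal.mk_union_le _ _).trans_lt
      (Cardinal.add_lt_of_lt hreg.aleph0_le ?_ ?_))
    · refine (Cardinal.card_iUnion_lt_iff_forall_of_isRegular hreg hsi).2 fun ⟨i, hi'⟩ => ?_
      obtain ⟨X, hX⟩ := Option.ne_none_iff_exists'.1 hi'
      simpa [hX] using hi i X hX (hgi i X hX) ys
    · refine (Cardinal.card_iUnion_lt_iff_forall_of_isRegular hreg hsb).2 fun ⟨j, hj'⟩ => ?_
      obtain ⟨A, hA⟩ := Option.ne_none_iff_exists'.1 hj'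
      simpa [hA] using hb j A hA (hgb j A hA) ys
  · intro xs x X hX h ys
    refine lt_of_le_of_lt (Cardinal.mk_le_mk_of_subset fun y hy => ?_)
      (hX X rfl (qGoodAbs_qAbs_iff.1 h) ys)
    exact fun hf => hy (qFreshAbs_qAbs_iff.2 (Or.inr hf))

theorem exists_qFresh (hreg : (Cardinal.mk var).IsRegular) (ys : varsort)
    (L : List (QTerm var varsort index bindex opsym))
    (hL : ∀ X ∈ L, QGood X) (avoid : List var) :
    ∃ y, y ∉ avoid ∧ ∀ X ∈ L, QFresh ys y X := by
  set S := {y | y ∈ avoid} ∪ ⋃ X : {X // X ∈ L}, {y | ¬ QFresh ys y X.1}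
  have hS : Cardinal.mk S < Cardinal.mk var := by
    refine (Cardinal.mk_union_le _ _).trans_lt (Cardinal.add_lt_of_lt hreg.aleph0_le ?_ ?_)
    · exact (avoid.finite_toSet.lt_aleph0).trans_le hreg.aleph0_le
    · refine (Cardinal.card_iUnion_lt_iff_forall_of_isRegular hreg
        ((Cardinal.lt_aleph0_of_finite _).trans_le hreg.aleph0_le)).2 fun X => ?_
      exact (mk_not_qFresh_lt_and hreg).1 X.1 (hL X.1 X.2) ys
  obtain ⟨y, hy⟩ : ∃ y, y ∉ S := by
    by_contra! h
    exact hS.ne (by rw [Set.eq_univ_of_forall h, Cardinal.mk_univ])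
  simp only [S, Set.mem_union, Set.mem_ofPred_eq, Set.mem_iUnion, not_or, not_exists,
    not_not] at hy
  exact ⟨y, hy.1, fun X hX => hy.2 ⟨X, hX⟩⟩

end FreshGood

section Alpha

variable {xs : varsort} {x : var} {d : opsym}
  {inp inp' : Input index (QTerm var varsort index bindex opsym)}
  {binp binp' : Input bindex (QAbs var varsort index bindex opsym)}
  {X X' : QTerm var varsort index bindex opsym} {A' : QAbs var varsort index bindex opsym}

theorem alpha_qOp (h : liftRel Alpha inp inp') (hb : liftRel AlphaAbs binp binp') :
    Alpha (.qOp d inp binp) (.qOp d inp' binp') :=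
  .qOp (liftRel_iff.1 h).1 (liftRel_iff.1 h).2 (liftRel_iff.1 hb).1 (liftRel_iff.1 hb).2

theorem alpha_qOp_inv (h : Alpha (.qOp d inp binp) X') :
    ∃ inp' binp', X' = .qOp d inp' binp' ∧ liftRel Alpha inp inp' ∧
      liftRel AlphaAbs binp binp' := by
  cases h with
  | qOp h1 h2 h3 h4 => exact ⟨_, _, rfl, liftRel_iff.2 ⟨h1, h2⟩, liftRel_iff.2 ⟨h3, h4⟩⟩

theorem alphaAbs_qAbs_inv (h : AlphaAbs (.qAbs xs x X) A') :
    ∃ x' X' w, A' = .qAbs xs x' X' ∧ w ∉ ({x, x'} : Set var) ∧ QFresh xs w X ∧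
      QFresh xs w X' ∧ Alpha (qSwap w x xs X) (qSwap w x' xs X') := by
  cases h with
  | qAbs hw hf hf' ha => exact ⟨_, _, _, rfl, hw, hf, hf', ha⟩

theorem alpha_symm_and :
    (∀ X : QTerm var varsort index bindex opsym, ∀ X', Alpha X X' → Alpha X' X) ∧
    (∀ A : QAbs var varsort index bindex opsym, ∀ A', AlphaAbs A A' → AlphaAbs A' A) := by
  refine QTerm.induction_on_size (fun _ _ _ h => by cases h; exact .qVar) ?_ ?_
  · intro d inp binp hi hb _ h
    obtain ⟨inp', binp', rfl, h, h'⟩ := alpha_qOp_inv h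
    exact alpha_qOp (h.mono fun i X X' hX => hi i X hX X').flip
      (h'.mono fun j A A' hA => hb j A hA A').flip
  · intro xs x X IH _ h
    obtain ⟨x', X', w, rfl, hw, hf, hf', ha⟩ := alphaAbs_qAbs_inv h
    exact .qAbs (Set.pair_comm x x' ▸ hw) hf' hf (IH _ (qSize_qSwap ..) _ ha)

theorem alpha_symm (h : Alpha X X') : Alpha X' X := alpha_symm_and.1 X X' h

theorem alphaAbs_symm {A A' : QAbs var varsort index bindex opsym} (h : AlphaAbs A A') :
    AlphaAbs A' A :=
  alpha_symm_and.2 A A' h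

theorem alpha_qSwap_and (z1 z2 : var) (zs : varsort) :
    (∀ X : QTerm var varsort index bindex opsym, ∀ X', Alpha X X' →
      Alpha (qSwap z1 z2 zs X) (qSwap z1 z2 zs X')) ∧
    (∀ A : QAbs var varsort index bindex opsym, ∀ A', AlphaAbs A A' →
      AlphaAbs (qSwapAbs z1 z2 zs A) (qSwapAbs z1 z2 zs A')) := by
  refine QTerm.induction_on_size (fun _ _ _ h => by cases h; exact .qVar) ?_ ?_
  · intro d inp binp hi hb _ h
    obtain ⟨inp', binp', rfl, h, h'⟩ := alpha_qOp_inv h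
    rw [qSwap_qOp, qSwap_qOp]
    exact alpha_qOp (.map (h.mono fun i X X' hX => hi i X hX X'))
      (.map (h'.mono fun j A A' hA => hb j A hA A'))
  · intro xs x X IH _ h
    obtain ⟨x', X', w, rfl, hw, hf, hf', ha⟩ := alphaAbs_qAbs_inv h
    have hσ := swapVarS_injective (var := var) zs xs z1 z2
    refine .qAbs (y := swapVarS var varsort zs xs z1 z2 w) ?_
      ((qFresh_qSwap_and z1 z2 zs).1 _ _ _ hf) ((qFresh_qSwap_and z1 z2 zs).1 _ _ _ hf') ?_
    · simpa [hσ.eq_iff] using hw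
    · simpa only [qSwap_qSwap z1 z2 w] using IH _ (qSize_qSwap ..) _ ha

theorem alpha_qSwap {z1 z2 : var} {zs : varsort} (h : Alpha X X') :
    Alpha (qSwap z1 z2 zs X) (qSwap z1 z2 zs X') :=
  (alpha_qSwap_and z1 z2 zs).1 X X' h

theorem alpha_qGood_and :
    (∀ X : QTerm var varsort index bindex opsym, ∀ X', Alpha X X' → QGood X → QGood X') ∧
    (∀ A : QAbs var varsort index bindex opsym, ∀ A', AlphaAbs A A' →
      QGoodAbs A → QGoodAbs A') := by
  refine QTerm.induction_on_size (fun _ _ _ h => by cases h; exact id) ?_ ?_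
  · intro d inp binp hi hb _ h hg
    obtain ⟨inp', binp', rfl, h, h'⟩ := alpha_qOp_inv h
    obtain ⟨hgi, hgb, hsi, hsb⟩ := qGood_qOp_iff.1 hg
    rw [qGood_qOp_iff, smallDom, smallDom, ← h.idom_eq, ← h'.idom_eq]
    exact ⟨h.liftP_of_liftP hgi fun i X X' hX => hi i X hX X',
      h'.liftP_of_liftP hgb fun j A A' hA => hb j A hA A', hsi, hsb⟩
  · intro xs x X IH _ h hg
    obtain ⟨x', X', w, rfl, -, -, -, ha⟩ := alphaAbs_qAbs_inv h
    rw [qGoodAbs_qAbs_iff] at hg ⊢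
    exact qGood_qSwap_iff.1 (IH _ (qSize_qSwap ..) _ ha (qGood_qSwap_iff.2 hg))

theorem alpha_qGood (h : Alpha X X') (hg : QGood X) : QGood X' :=
  alpha_qGood_and.1 X X' h hg

theorem alpha_qSize_and :
    (∀ X : QTerm var varsort index bindex opsym, ∀ X', Alpha X X' → qSize X = qSize X') ∧
    (∀ A : QAbs var varsort index bindex opsym, ∀ A', AlphaAbs A A' →
      qSizeAbs A = qSizeAbs A') := by
  refine QTerm.induction_on_size (fun _ _ _ h => by cases h; rfl) ?_ ?_
  · intro d inp binp hi hb _ h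
    obtain ⟨inp', binp', rfl, h, h'⟩ := alpha_qOp_inv h
    exact qSize_qOp_congr (h.mono fun i X X' hX => hi i X hX X')
      (h'.mono fun j A A' hA => hb j A hA A')
  · intro xs x X IH _ h
    obtain ⟨x', X', w, rfl, -, -, -, ha⟩ := alphaAbs_qAbs_inv h
    have := IH _ (qSize_qSwap ..) _ ha
    rw [qSize_qSwap, qSize_qSwap] at this
    simp [qSizeAbs, this]

theorem alpha_qSize (h : Alpha X X') : qSize X = qSize X' :=
  alpha_qSize_and.1 X X' h

end Alpha

section AlphaEquivalence

variable {xs zs : varsort} {x u z1 z2 : var} {X X' : QTerm var varsort index bindex opsym}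

theorem alpha_refl_and (hreg : (Cardinal.mk var).IsRegular) :
    (∀ X : QTerm var varsort index bindex opsym, QGood X → Alpha X X) ∧
    (∀ A : QAbs var varsort index bindex opsym, QGoodAbs A → AlphaAbs A A) := by
  refine QTerm.induction_on_size (fun _ _ _ => .qVar) ?_ ?_
  · intro d inp binp hi hb hg
    obtain ⟨hgi, hgb, -, -⟩ := qGood_qOp_iff.1 hg
    exact alpha_qOp (liftRel_refl fun i X hX => hi i X hX (hgi i X hX))
      (liftRel_refl fun j A hA => hb j A hA (hgb j A hA))
  · intro xs x X IH hg
    rw [qGoodAbs_qAbs_iff] at hg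
    obtain ⟨w, hw, hwX⟩ := exists_qFresh hreg xs [X] (by simpa using hg) [x]
    exact .qAbs (by simpa using hw) (hwX X (by simp)) (hwX X (by simp))
      (IH _ (qSize_qSwap ..) (qGood_qSwap_iff.2 hg))

theorem alpha_refl (hreg : (Cardinal.mk var).IsRegular) (hg : QGood X) : Alpha X X :=
  (alpha_refl_and hreg).1 X hg

theorem alphaAbs_qAbs_congr (hreg : (Cardinal.mk var).IsRegular) (xs : varsort) (x : var)
    (hg : QGood X) (h : Alpha X X') : AlphaAbs (.qAbs xs x X) (.qAbs xs x X') := by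
  obtain ⟨w, hw, hwX⟩ := exists_qFresh hreg xs [X, X'] (by simp [hg, alpha_qGood h hg]) [x]
  exact .qAbs (by simpa using hw) (hwX X (by simp)) (hwX X' (by simp)) (alpha_qSwap h)

theorem alphaAbs_rename (hreg : (Cardinal.mk var).IsRegular) (hg : QGood X)
    (hF : ∀ a b, QFresh xs a X → QFresh xs b X → Alpha (qSwap a b xs X) X)
    (hu : QFreshAbs xs u (.qAbs xs x X)) :
    AlphaAbs (.qAbs xs u (qSwap u x xs X)) (.qAbs xs x X) := by
  by_cases hux : u = x
  · subst hux
    rw [qSwap_self]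
    exact (alpha_refl_and hreg).2 _ (qGoodAbs_qAbs_iff.2 hg)
  have huX : QFresh xs u X := by simpa [hux] using hu
  obtain ⟨w, hw, hwX⟩ :=
    exists_qFresh hreg xs [X, qSwap u x xs X] (by simp [hg]) [x, u]
  simp only [List.mem_cons, List.not_mem_nil, or_false, not_or] at hw
  refine .qAbs (by simpa [eq_comm] using hw.symm) (hwX _ (by simp)) (hwX _ (by simp)) ?_
  rw [qSwap_qSwap_of_ne hw.1 hux]
  exact alpha_qSwap (hF w u (hwX _ (by simp)) huX)

theorem qSwap_alpha_of_qFresh_and (hreg : (Cardinal.mk var).IsRegular) :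
    (∀ X : QTerm var varsort index bindex opsym, QGood X → ∀ z1 z2 zs,
      QFresh zs z1 X → QFresh zs z2 X → Alpha (qSwap z1 z2 zs X) X) ∧
    (∀ A : QAbs var varsort index bindex opsym, QGoodAbs A → ∀ z1 z2 zs,
      QFreshAbs zs z1 A → QFreshAbs zs z2 A → AlphaAbs (qSwapAbs z1 z2 zs A) A) := by
  refine QTerm.induction_on_size ?_ ?_ ?_
  · intro xs x _ z1 z2 zs h1 h2
    rw [qFresh_qVar_iff] at h1 h2
    rw [qSwap_qVar, swapVarS_of_ne h1 h2]
    exact .qVar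
  · intro d inp binp hi hb hg z1 z2 zs h1 h2
    obtain ⟨hgi, hgb, -, -⟩ := qGood_qOp_iff.1 hg
    rw [qFresh_qOp_iff] at h1 h2
    rw [qSwap_qOp]
    exact alpha_qOp
      (.map_left (liftRel_refl fun i X hX => hi i X hX (hgi i X hX) z1 z2 zs
        (h1.1 i X hX) (h2.1 i X hX)))
      (.map_left (liftRel_refl fun j A hA => hb j A hA (hgb j A hA) z1 z2 zs
        (h1.2 j A hA) (h2.2 j A hA)))
  · intro xs x X IH hg z1 z2 zs h1 h2
    rw [qGoodAbs_qAbs_iff] at hg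
    have hF := fun a b => IH X rfl hg a b xs
    rw [qSwapAbs_qAbs]
    by_cases hx1 : (zs, z1) = (xs, x)
    · obtain ⟨rfl, rfl⟩ := Prod.mk.inj hx1
      rw [swapVarS_of_sort_eq, Equiv.swap_apply_left, qSwap_comm]
      exact alphaAbs_rename hreg hg hF h2
    by_cases hx2 : (zs, z2) = (xs, x)
    · obtain ⟨rfl, rfl⟩ := Prod.mk.inj hx2
      rw [swapVarS_of_sort_eq, Equiv.swap_apply_right]
      exact alphaAbs_rename hreg hg hF h1
    rw [qFreshAbs_qAbs_iff] at h1 h2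
    rw [swapVarS_of_ne hx1 hx2]
    exact alphaAbs_qAbs_congr hreg xs x (qGood_qSwap_iff.2 hg)
      (IH X rfl hg z1 z2 zs (h1.resolve_left hx1) (h2.resolve_left hx2))

theorem qSwap_alpha_of_qFresh (hreg : (Cardinal.mk var).IsRegular) (hg : QGood X)
    (h1 : QFresh zs z1 X) (h2 : QFresh zs z2 X) : Alpha (qSwap z1 z2 zs X) X :=
  (qSwap_alpha_of_qFresh_and hreg).1 X hg z1 z2 zs h1 h2

end AlphaEquivalence

section Transitivity

variable {xs : varsort} {x x' u w : var} {X X' : QTerm var varsort index bindex opsym}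

/-- The some/any property of the exists-fresh clause. Transitivity is assumed only at the size
of `X`, so that this can be used inside the induction proving it. -/
theorem alpha_qSwap_any_of_some (hreg : (Cardinal.mk var).IsRegular)
    (hgX : QGood X) (hgX' : QGood X')
    (hT : ∀ P : QTerm var varsort index bindex opsym, qSize P = qSize X → QGood P →
      ∀ Q R, Alpha P Q → Alpha Q R → Alpha P R)
    (hu : u ∉ ({x, x'} : Set var)) (huX : QFresh xs u X) (huX' : QFresh xs u X')
    (ha : Alpha (qSwap u x xs X) (qSwap u x' xs X'))
    (hw : w ∉ ({x, x'} : Set var)) (hwX : QFresh xs w X) (hwX' : QFresh xs w X') :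
    Alpha (qSwap w x xs X) (qSwap w x' xs X') := by
  simp only [Set.mem_insert_iff, Set.mem_singleton_iff, not_or] at hu hw
  have h1 : Alpha (qSwap w x xs X) (qSwap w x xs (qSwap w u xs X)) :=
    alpha_symm (alpha_qSwap (qSwap_alpha_of_qFresh hreg hgX hwX huX))
  have h2 : Alpha (qSwap w x xs (qSwap w u xs X)) (qSwap w x' xs (qSwap w u xs X')) := by
    rw [← qSwap_qSwap_of_ne hw.1 hu.1, ← qSwap_qSwap_of_ne hw.2 hu.2]
    exact alpha_qSwap ha
  have h3 : Alpha (qSwap w x' xs (qSwap w u xs X')) (qSwap w x' xs X') :=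
    alpha_qSwap (qSwap_alpha_of_qFresh hreg hgX' hwX' huX')
  have hsz : qSize (qSwap w x xs X) = qSize X := qSize_qSwap ..
  have hg : QGood (qSwap w x xs X) := qGood_qSwap_iff.2 hgX
  exact hT _ hsz hg _ _ (hT _ hsz hg _ _ h1 h2) h3

theorem alpha_trans_and (hreg : (Cardinal.mk var).IsRegular) :
    (∀ X : QTerm var varsort index bindex opsym, QGood X →
      ∀ Y Z, Alpha X Y → Alpha Y Z → Alpha X Z) ∧
    (∀ A : QAbs var varsort index bindex opsym, QGoodAbs A →
      ∀ B C, AlphaAbs A B → AlphaAbs B C → AlphaAbs A C) := by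
  refine QTerm.induction_on_size (fun _ _ _ _ _ h h' => by cases h; exact h') ?_ ?_
  · intro d inp binp hi hb hg _ _ hXY hYZ
    obtain ⟨hgi, hgb, -, -⟩ := qGood_qOp_iff.1 hg
    obtain ⟨inp', binp', rfl, h, h'⟩ := alpha_qOp_inv hXY
    obtain ⟨inp'', binp'', rfl, k, k'⟩ := alpha_qOp_inv hYZ
    exact alpha_qOp (h.trans k fun i X Y Z hX => hi i X hX (hgi i X hX) Y Z)
      (h'.trans k' fun j A B C hA => hb j A hA (hgb j A hA) B C)
  · intro xs x X IH hg _ _ hAB hBC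
    rw [qGoodAbs_qAbs_iff] at hg
    obtain ⟨x', X', u, rfl, hu, huX, huX', ha⟩ := alphaAbs_qAbs_inv hAB
    obtain ⟨x'', X'', v, rfl, hv, hvX', hvX'', ha'⟩ := alphaAbs_qAbs_inv hBC
    have hgX' : QGood X' := qGood_qSwap_iff.1 (alpha_qGood ha (qGood_qSwap_iff.2 hg))
    have hgX'' : QGood X'' := qGood_qSwap_iff.1 (alpha_qGood ha' (qGood_qSwap_iff.2 hgX'))
    have hsz : qSize X' = qSize X := by
      simpa only [qSize_qSwap, eq_comm] using alpha_qSize ha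
    obtain ⟨w, hw, hwX⟩ :=
      exists_qFresh hreg xs [X, X', X''] (by simp [hg, hgX', hgX'']) [x, x', x'']
    simp only [List.mem_cons, List.not_mem_nil, or_false, not_or] at hw
    have h1 := alpha_qSwap_any_of_some hreg hg hgX' IH hu huX huX' ha (w := w)
      (by simp [hw.1, hw.2.1]) (hwX X (by simp)) (hwX X' (by simp))
    have h2 := alpha_qSwap_any_of_some hreg hgX' hgX'' (fun P hP => IH P (hP.trans hsz))
      hv hvX' hvX'' ha' (w := w) (by simp [hw.2.1, hw.2.2]) (hwX X' (by simp))
      (hwX X'' (by simp))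
    exact .qAbs (by simp [hw.1, hw.2.2]) (hwX X (by simp)) (hwX X'' (by simp))
      (IH _ (qSize_qSwap ..) (qGood_qSwap_iff.2 hg) _ _ h1 h2)

theorem alpha_trans (hreg : (Cardinal.mk var).IsRegular)
    {Y Z : QTerm var varsort index bindex opsym}
    (hg : QGood X) (h : Alpha X Y) (h' : Alpha Y Z) : Alpha X Z :=
  (alpha_trans_and hreg).1 X hg Y Z h h'

theorem alphaAbs_trans (hreg : (Cardinal.mk var).IsRegular)
    {A B C : QAbs var varsort index bindex opsym}
    (hg : QGoodAbs A) (h : AlphaAbs A B) (h' : AlphaAbs B C) : AlphaAbs A C :=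
  (alpha_trans_and hreg).2 A hg B C h h'

theorem alpha_qSwap_of_alphaAbs (hreg : (Cardinal.mk var).IsRegular) (hgX : QGood X)
    (h : AlphaAbs (.qAbs xs x X) (.qAbs xs x' X')) (hw : w ∉ ({x, x'} : Set var))
    (hwX : QFresh xs w X) (hwX' : QFresh xs w X') :
    Alpha (qSwap w x xs X) (qSwap w x' xs X') := by
  obtain ⟨_, _, u, he, hu, huX, huX', ha⟩ := alphaAbs_qAbs_inv h
  obtain ⟨rfl, rfl⟩ := QAbs.qAbs.inj he |>.2
  have hgX' : QGood X' := qGood_qSwap_iff.1 (alpha_qGood ha (qGood_qSwap_iff.2 hgX))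
  exact alpha_qSwap_any_of_some hreg hgX hgX' (fun _ _ hP _ _ => alpha_trans hreg hP)
    hu huX huX' ha hw hwX hwX'

end Transitivity

section Quotient

variable {X Y : QTerm var varsort index bindex opsym}

theorem qGood_iff_of_eqvGen (h : Relation.EqvGen Alpha X Y) : QGood X ↔ QGood Y := by
  induction h with
  | rel _ _ h => exact ⟨alpha_qGood h, alpha_qGood (alpha_symm h)⟩
  | refl => exact Iff.rfl
  | symm _ _ _ ih => exact ih.symm
  | trans _ _ _ _ _ ih ih' => exact ih.trans ih'

theorem alpha_of_eqvGen (hreg : (Cardinal.mk var).IsRegular) (h : Relation.EqvGen Alpha X Y)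
    (hg : QGood X) : Alpha X Y := by
  induction h with
  | rel _ _ h => exact h
  | refl => exact alpha_refl hreg hg
  | symm _ _ h ih => exact alpha_symm (ih ((qGood_iff_of_eqvGen h).2 hg))
  | trans _ _ _ h _ ih ih' => exact alpha_trans hreg hg (ih hg) (ih' ((qGood_iff_of_eqvGen h).1 hg))

theorem alpha_iff_tmk_eq (hreg : (Cardinal.mk var).IsRegular) (hg : QGood X) :
    Alpha X Y ↔ tmk X = tmk Y :=
  ⟨Quot.sound, fun h => alpha_of_eqvGen hreg (Quot.eqvGen_exact h) hg⟩

theorem tmk_trep (X : Term var varsort index bindex opsym) : tmk (trep X) = X :=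
  Quot.out_eq X

theorem alpha_trep_tmk (hreg : (Cardinal.mk var).IsRegular) (hg : QGood X) :
    Alpha X (trep (tmk X)) :=
  (alpha_iff_tmk_eq hreg hg).2 (tmk_trep _).symm

theorem tswap_tmk (hreg : (Cardinal.mk var).IsRegular) (hg : QGood X) (z1 z2 : var)
    (zs : varsort) : tswap (tmk X) z1 z2 zs = tmk (qSwap z1 z2 zs X) :=
  Quot.sound (alpha_qSwap (alpha_symm (alpha_trep_tmk hreg hg)))

end Quotient

section Substitution

variable {y : var} {ys : varsort} {d : opsym}
  {inp inp' : Input index (QTerm var varsort index bindex opsym)}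
  {binp binp' : Input bindex (QAbs var varsort index bindex opsym)}
  {X Y Z : QTerm var varsort index bindex opsym}

theorem qSubst_qOp (h : liftRel (fun X Z => QSubst X Y y ys Z) inp inp')
    (hb : liftRel (fun A B => QSubstAbs A Y y ys B) binp binp') :
    QSubst (.qOp d inp binp) Y y ys (.qOp d inp' binp') :=
  .op (liftRel_iff.1 h).1 (liftRel_iff.1 h).2 (liftRel_iff.1 hb).1 (liftRel_iff.1 hb).2

theorem qSubst_qOp_inv (h : QSubst (.qOp d inp binp) Y y ys Z) :
    ∃ inp' binp', Z = .qOp d inp' binp' ∧ liftRel (fun X Z => QSubst X Y y ys Z) inp inp' ∧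
      liftRel (fun A B => QSubstAbs A Y y ys B) binp binp' := by
  cases h with
  | op h1 h2 h3 h4 => exact ⟨_, _, rfl, liftRel_iff.2 ⟨h1, h2⟩, liftRel_iff.2 ⟨h3, h4⟩⟩

theorem qSubstAbs_qAbs_inv {xs : varsort} {x : var} {B : QAbs var varsort index bindex opsym}
    (h : QSubstAbs (.qAbs xs x X) Y y ys B) :
    ∃ Z, B = .qAbs xs x Z ∧ (xs, x) ≠ (ys, y) ∧ QFresh xs x Y ∧ QSubst X Y y ys Z := by
  cases h with
  | abs hne hf hs => exact ⟨_, rfl, hne, hf, hs⟩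

theorem qSubst_qSwap_and (z1 z2 : var) (zs : varsort) :
    (∀ X : QTerm var varsort index bindex opsym, ∀ Y y ys Z, QSubst X Y y ys Z →
      QSubst (qSwap z1 z2 zs X) (qSwap z1 z2 zs Y)
        (swapVarS var varsort zs ys z1 z2 y) ys (qSwap z1 z2 zs Z)) ∧
    (∀ A : QAbs var varsort index bindex opsym, ∀ Y y ys B, QSubstAbs A Y y ys B →
      QSubstAbs (qSwapAbs z1 z2 zs A) (qSwap z1 z2 zs Y)
        (swapVarS var varsort zs ys z1 z2 y) ys (qSwapAbs z1 z2 zs B)) := by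
  refine QTerm.induction_on_size ?_ ?_ ?_
  · intro xs x Y y ys Z h
    cases h with
    | var_eq => exact .var_eq
    | var_ne hne => exact .var_ne (swapVarS_pair_ne hne)
  · intro d inp binp hi hb Y y ys Z h
    obtain ⟨inp', binp', rfl, h, h'⟩ := qSubst_qOp_inv h
    rw [qSwap_qOp, qSwap_qOp]
    exact qSubst_qOp (.map (h.mono fun i X Z hX => hi i X hX Y y ys Z))
      (.map (h'.mono fun j A B hA => hb j A hA Y y ys B))
  · intro xs x X IH Y y ys B h
    cases h with
    | abs hne hf hs =>
      exact .abs (swapVarS_pair_ne hne) ((qFresh_qSwap_and z1 z2 zs).1 _ _ _ hf)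
        (IH X rfl Y y ys _ hs)

theorem qSubst_qSwap (z1 z2 : var) (zs : varsort) (h : QSubst X Y y ys Z) :
    QSubst (qSwap z1 z2 zs X) (qSwap z1 z2 zs Y)
      (swapVarS var varsort zs ys z1 z2 y) ys (qSwap z1 z2 zs Z) :=
  (qSubst_qSwap_and z1 z2 zs).1 X Y y ys Z h

theorem qSubst_qGood_and :
    (∀ X : QTerm var varsort index bindex opsym, ∀ Y y ys Z, QSubst X Y y ys Z →
      QGood X → QGood Y → QGood Z) ∧
    (∀ A : QAbs var varsort index bindex opsym, ∀ Y y ys B, QSubstAbs A Y y ys B →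
      QGoodAbs A → QGood Y → QGoodAbs B) := by
  refine QTerm.induction_on_size ?_ ?_ ?_
  · intro xs x Y y ys Z h hgX hgY
    cases h with
    | var_eq => exact hgY
    | var_ne => exact hgX
  · intro d inp binp hi hb Y y ys Z h hgX hgY
    obtain ⟨inp', binp', rfl, h, h'⟩ := qSubst_qOp_inv h
    obtain ⟨hgi, hgb, hsi, hsb⟩ := qGood_qOp_iff.1 hgX
    rw [qGood_qOp_iff, smallDom, smallDom, ← h.idom_eq, ← h'.idom_eq]
    exact ⟨h.liftP_of_liftP hgi fun i X Z hX hs hgX => hi i X hX Y y ys Z hs hgX hgY,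
      h'.liftP_of_liftP hgb fun j A B hA hs hgA => hb j A hA Y y ys B hs hgA hgY, hsi, hsb⟩
  · intro xs x X IH Y y ys B h hgA hgY
    cases h with
    | abs _ _ hs => exact .qAbs (IH X rfl Y y ys _ hs (qGoodAbs_qAbs_iff.1 hgA) hgY)

theorem qSubst_qGood (h : QSubst X Y y ys Z) (hgX : QGood X) (hgY : QGood Y) : QGood Z :=
  qSubst_qGood_and.1 X Y y ys Z h hgX hgY

theorem exists_qSubst_and (hreg : (Cardinal.mk var).IsRegular) (hgY : QGood Y) (y : var)
    (ys : varsort) :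
    (∀ X : QTerm var varsort index bindex opsym, QGood X →
      ∃ X' Z, Alpha X X' ∧ QSubst X' Y y ys Z) ∧
    (∀ A : QAbs var varsort index bindex opsym, QGoodAbs A →
      ∃ A' B, AlphaAbs A A' ∧ QSubstAbs A' Y y ys B) := by
  refine QTerm.induction_on_size ?_ ?_ ?_
  · intro xs x _
    by_cases h : (xs, x) = (ys, y)
    · obtain ⟨rfl, rfl⟩ := Prod.mk.inj h
      exact ⟨_, Y, .qVar, .var_eq⟩
    · exact ⟨_, _, .qVar, .var_ne h⟩
  · intro d inp binp hi hb hg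
    obtain ⟨hgi, hgb, -, -⟩ := qGood_qOp_iff.1 hg
    obtain ⟨pinp, h⟩ := exists_liftRel
      (R := fun X (p : QTerm var varsort index bindex opsym × _) =>
        Alpha X p.1 ∧ QSubst p.1 Y y ys p.2)
      fun i X hX => by simpa using hi i X hX (hgi i X hX)
    obtain ⟨pbinp, h'⟩ := exists_liftRel
      (R := fun A (p : QAbs var varsort index bindex opsym × _) =>
        AlphaAbs A p.1 ∧ QSubstAbs p.1 Y y ys p.2)
      fun j A hA => by simpa using hb j A hA (hgb j A hA)
    have hs : liftP (fun p => QSubst p.1 Y y ys p.2) pinp :=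
      h.liftP_of_liftP (P := fun _ => True) (fun _ _ _ => trivial) fun _ _ _ _ hp _ => hp.2
    have hs' : liftP (fun p => QSubstAbs p.1 Y y ys p.2) pbinp :=
      h'.liftP_of_liftP (P := fun _ => True) (fun _ _ _ => trivial) fun _ _ _ _ hp _ => hp.2
    exact ⟨_, _, alpha_qOp (.map_right (h.mono fun _ _ _ _ hp => hp.1))
        (.map_right (h'.mono fun _ _ _ _ hp => hp.1)),
      qSubst_qOp (.map (f := Prod.fst) (g := Prod.snd) (liftRel_refl hs))
        (.map (f := Prod.fst) (g := Prod.snd) (liftRel_refl hs'))⟩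
  · intro xs x X IH hg
    rw [qGoodAbs_qAbs_iff] at hg
    obtain ⟨u, hu, huX⟩ := exists_qFresh hreg xs [X, Y] (by simp [hg, hgY]) [x, y]
    simp only [List.mem_cons, List.not_mem_nil, or_false, not_or] at hu
    obtain ⟨X', Z, ha, hs⟩ := IH (qSwap u x xs X) (qSize_qSwap ..) (qGood_qSwap_iff.2 hg)
    refine ⟨.qAbs xs u X', .qAbs xs u Z, ?_, .abs (by simp [hu.2]) (huX Y (by simp)) hs⟩
    refine alphaAbs_trans hreg (qGoodAbs_qAbs_iff.2 hg) (alphaAbs_symm ?_)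
      (alphaAbs_qAbs_congr hreg xs u (qGood_qSwap_iff.2 hg) ha)
    exact alphaAbs_rename hreg hg (fun _ _ => qSwap_alpha_of_qFresh hreg hg)
      (qFreshAbs_qAbs_iff.2 (Or.inr (huX X (by simp))))

end Substitution

section Uniqueness

variable {y : var} {ys : varsort}

theorem alpha_of_qSubst_and (hreg : (Cardinal.mk var).IsRegular) :
    (∀ X : QTerm var varsort index bindex opsym, QGood X → ∀ X' Y Y' Z Z', QGood Y →
      Alpha X X' → Alpha Y Y' → QSubst X Y y ys Z → QSubst X' Y' y ys Z' → Alpha Z Z') ∧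
    (∀ A : QAbs var varsort index bindex opsym, QGoodAbs A → ∀ A' Y Y' B B', QGood Y →
      AlphaAbs A A' → Alpha Y Y' → QSubstAbs A Y y ys B → QSubstAbs A' Y' y ys B' →
        AlphaAbs B B') := by
  refine QTerm.induction_on_size ?_ ?_ ?_
  · intro xs x _ _ Y Y' Z Z' _ hXX' hYY' hs hs'
    cases hXX'
    cases hs <;> cases hs'
    · exact hYY'
    all_goals first | exact absurd rfl ‹_› | exact .qVar
  · intro d inp binp hi hb hg _ Y Y' _ _ hgY hXX' hYY' hs hs'
    obtain ⟨hgi, hgb, -, -⟩ := qGood_qOp_iff.1 hg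
    obtain ⟨inp', binp', rfl, h, h'⟩ := alpha_qOp_inv hXX'
    obtain ⟨zinp, zbinp, rfl, k, k'⟩ := qSubst_qOp_inv hs
    obtain ⟨zinp', zbinp', rfl, l, l'⟩ := qSubst_qOp_inv hs'
    have hc : liftRel (fun X Z' => ∃ X', Alpha X X' ∧ QSubst X' Y' y ys Z') inp zinp' :=
      h.trans l fun _ _ X' _ _ hX' hs' => ⟨X', hX', hs'⟩
    have hc' :
        liftRel (fun A B' => ∃ A', AlphaAbs A A' ∧ QSubstAbs A' Y' y ys B') binp zbinp' :=
      h'.trans l' fun _ _ A' _ _ hA' hs' => ⟨A', hA', hs'⟩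
    exact alpha_qOp
      (k.span hc fun i X _ _ hX hs ⟨X', hX', hs'⟩ =>
        hi i X hX (hgi i X hX) X' Y Y' _ _ hgY hX' hYY' hs hs')
      (k'.span hc' fun j A _ _ hA hs ⟨A', hA', hs'⟩ =>
        hb j A hA (hgb j A hA) A' Y Y' _ _ hgY hA' hYY' hs hs')
  · intro xs x X IH hg _ Y Y' _ _ hgY hAA' hYY' hs hs'
    rw [qGoodAbs_qAbs_iff] at hg
    obtain ⟨x', X', u, rfl, -, -, -, ha⟩ := alphaAbs_qAbs_inv hAA'
    obtain ⟨Z, rfl, hne, hxY, hs⟩ := qSubstAbs_qAbs_inv hs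
    obtain ⟨Z', rfl, hne', hxY', hs'⟩ := qSubstAbs_qAbs_inv hs'
    have hgX' : QGood X' := qGood_qSwap_iff.1 (alpha_qGood ha (qGood_qSwap_iff.2 hg))
    have hgY' : QGood Y' := alpha_qGood hYY' hgY
    obtain ⟨w, hw, hwX⟩ := exists_qFresh hreg xs [X, X', Z, Z', Y, Y']
      (by simp [hg, hgX', hgY, hgY', qSubst_qGood hs hg hgY, qSubst_qGood hs' hgX' hgY'])
      [x, x', y]
    simp only [List.mem_cons, List.not_mem_nil, or_false, not_or] at hw
    have hwy : (xs, w) ≠ (ys, y) := fun h => hw.2.2 (Prod.mk.inj h).2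
    have hX : Alpha (qSwap w x xs X) (qSwap w x' xs X') :=
      alpha_qSwap_of_alphaAbs hreg hg hAA' (by simp [hw.1, hw.2.1]) (hwX X (by simp))
        (hwX X' (by simp))
    have hY : Alpha (qSwap w x xs Y) (qSwap w x' xs Y') := by
      have hwY := qSwap_alpha_of_qFresh hreg hgY (hwX Y (by simp)) hxY
      have hwY' := qSwap_alpha_of_qFresh hreg hgY' (hwX Y' (by simp)) hxY'
      exact alpha_trans hreg (qGood_qSwap_iff.2 hgY) hwY
        (alpha_trans hreg hgY hYY' (alpha_symm hwY'))
    have hZ := IH _ (qSize_qSwap ..) (qGood_qSwap_iff.2 hg) _ _ _ _ _ (qGood_qSwap_iff.2 hgY)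
      hX hY
      (swapVarS_of_ne hwy hne ▸ qSubst_qSwap w x xs hs)
      (swapVarS_of_ne hwy hne' ▸ qSubst_qSwap w x' xs hs')
    exact .qAbs (by simp [hw.1, hw.2.1]) (hwX Z (by simp)) (hwX Z' (by simp)) hZ

theorem alpha_of_qSubst (hreg : (Cardinal.mk var).IsRegular)
    {X X' Y Y' Z Z' : QTerm var varsort index bindex opsym} (hgX : QGood X) (hgY : QGood Y)
    (hX : Alpha X X') (hY : Alpha Y Y') (h : QSubst X Y y ys Z) (h' : QSubst X' Y' y ys Z') :
    Alpha Z Z' :=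
  (alpha_of_qSubst_and hreg).1 X hgX X' Y Y' Z Z' hgY hX hY h h'

theorem subst_tmk (hreg : (Cardinal.mk var).IsRegular)
    {X Y Z : QTerm var varsort index bindex opsym}
    (hgX : QGood X) (hgY : QGood Y) (h : QSubst X Y y ys Z) :
    subst (tmk X) (tmk Y) y ys = tmk Z := by
  have hgY' : QGood (trep (tmk Y)) := alpha_qGood (alpha_trep_tmk hreg hgY) hgY
  have hex : ∃ Z', SubstRel (tmk X) (tmk Y) y ys Z' := by
    obtain ⟨X', Z', hX', hs⟩ := (exists_qSubst_and hreg hgY' y ys).1 X hgX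
    exact ⟨tmk Z', X', Z', (Quot.sound hX').symm, rfl, hs⟩
  obtain ⟨X', Z', hX', hZ', hs⟩ := hex.choose_spec
  rw [subst, dif_pos hex, ← hZ']
  exact (Quot.sound (alpha_of_qSubst hreg hgX hgY ((alpha_iff_tmk_eq hreg hgX).2 hX'.symm)
    (alpha_trep_tmk hreg hgY) h hs)).symm

end Uniqueness

/-- swapping distributes over substitution. -/
theorem swap_subst (hinf : Cardinal.aleph0 ≤ Cardinal.mk var)
    (hreg : (Cardinal.mk var).IsRegular)
    (X Y : Term var varsort index bindex opsym) (hX : good X) (hY : good Y)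
    (x z1 z2 : var) (xs zs : varsort) :
    tswap (subst Y X x xs) z1 z2 zs =
      subst (tswap Y z1 z2 zs) (tswap X z1 z2 zs)
        (swapVarS var varsort zs xs z1 z2 x) xs := by
  obtain ⟨Y', Z, hYY', hs⟩ := (exists_qSubst_and hreg hX x xs).1 (trep Y) hY
  have hgY' : QGood Y' := alpha_qGood hYY' hY
  have hY' : tmk Y' = Y := (Quot.sound hYY').symm.trans (tmk_trep Y)
  rw [← hY', ← tmk_trep X, subst_tmk hreg hgY' hX hs, tswap_tmk hreg (qSubst_qGood hs hgY' hX),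
    tswap_tmk hreg hgY', tswap_tmk hreg hX,
    subst_tmk hreg (qGood_qSwap_iff.2 hgY') (qGood_qSwap_iff.2 hX) (qSubst_qSwap z1 z2 zs hs)]

end Binding
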